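/- Suppose 1 ≤ i ≤ n and τ ∈ R_L fixes every block of ℬ_i setwise but does not fix every block of ℬ_{i−1} setwise, and suppose τ' ∈ π⁻¹R_Lπ satisfies τ'(B) = τ(B) for some block B ∈ ℬ_{i−1}. Then τ'(B') = τ(B') for every block B' ∈ ℬ_{i−1}. -/

import Mathlib

/-!
Since `R_L ≤ G`, the blocks of `ℬ_{i-1}` and `ℬ_i` through `0` are subgroups `H < H'` with
`|H' : H| = p`, and every block is a coset. In the `p`-group `G`, the kernel of the action on
`ℬ_i` properly contains the kernel `M` of the action on `ℬ_{i-1}`, hence contains some `g ∉ M`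
that is central modulo `M`. Comparing `g` with translations, `g` acts modulo `H` as translation
by some `a ∈ H' \ H`; so translation by any element of `⟨a⟩ + H = H'`, in particular `τ`,
commutes with all of `G` modulo `H`. Finally `π⁻¹R_Lπ` is abelian and transitive: every point is
`μ x` with `μ ∈ π⁻¹R_Lπ` and `x ∈ B`, and `τ'(μ x) = μ(τ' x) ≡ μ(τ x) ≡ τ(μ x)` modulo `H`.
-/

abbrev Pt (p n : ℕ) := Fin n → ZMod p

/-- The left regular representation `R_L` of `(ℤ/pℤ)^n` inside `Sym(R)`: all translations. -/
def RL (p n : ℕ) : Subgroup (Equiv.Perm (Pt p n)) where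
  carrier := {σ | ∃ r : Pt p n, ∀ x, σ x = r + x}
  one_mem' := ⟨0, fun x => by simp⟩
  mul_mem' := by
    rintro a b ⟨r, hr⟩ ⟨s, hs⟩
    refine ⟨r + s, fun x => ?_⟩
    simp [Equiv.Perm.mul_apply, hr, hs, add_assoc]
  inv_mem' := by
    rintro a ⟨r, hr⟩
    refine ⟨-r, fun x => ?_⟩
    have h := hr (a⁻¹ x)
    rw [show a (a⁻¹ x) = x from (Equiv.eq_symm_apply a).mp rfl] at h
    have h2 : -r + x = a⁻¹ x := by
      conv_lhs => rw [h]
      abel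
    exact h2.symm

/-- The conjugate `π⁻¹ R_L π` of the left regular representation. -/
def RLpi (p n : ℕ) (π : Equiv.Perm (Pt p n)) : Subgroup (Equiv.Perm (Pt p n)) where
  carrier := {σ | ∃ ρ ∈ RL p n, σ = π⁻¹ * ρ * π}
  one_mem' := ⟨1, one_mem _, by group⟩
  mul_mem' := by
    rintro a b ⟨r, hr, rfl⟩ ⟨s, hs, rfl⟩
    exact ⟨r * s, mul_mem hr hs, by group⟩
  inv_mem' := by
    rintro a ⟨r, hr, rfl⟩
    exact ⟨r⁻¹, inv_mem hr, by group⟩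

/-- `σ` belongs to the 2-closure `G^{(2)}` of `G`. -/
def twoClosed {α : Type*} (G : Subgroup (Equiv.Perm α)) (σ : Equiv.Perm α) : Prop :=
  ∀ x y : α, ∃ g ∈ G, σ x = g x ∧ σ y = g y

open Equiv
open scoped commutatorElement

namespace IsPGroup

variable {p : ℕ} [Fact p.Prime] {P : Type*} [Group P] [Finite P]

theorem exists_ne_one_mem_center_of_normal (hP : IsPGroup p P) {N : Subgroup P} [N.Normal]
    (hN : N ≠ ⊥) : ∃ z ∈ N, z ≠ 1 ∧ z ∈ Subgroup.center P := by
  have : Nontrivial N := (Subgroup.nontrivial_iff_ne_bot N).2 hN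
  obtain ⟨k, hk, hcard⟩ := (hP.to_subgroup N).nontrivial_iff_card.1 this
  have hpN : p ∣ Nat.card N := hcard ▸ dvd_pow_self p hk.ne'
  obtain ⟨z, hz, hz1⟩ := (hP.of_equiv ConjAct.toConjAct)
    |>.exists_fixed_point_of_prime_dvd_card_of_fixed_point N hpN (a := 1) fun g => smul_one g
  refine ⟨z, z.2, fun h => hz1 (Subtype.ext h.symm), Subgroup.mem_center_iff.2 fun g => ?_⟩
  have := congrArg Subtype.val (hz (ConjAct.toConjAct g))
  rw [ConjAct.Subgroup.val_conj_smul, ConjAct.toConjAct_smul] at this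
  exact mul_inv_eq_iff_eq_mul.1 this

theorem exists_commutatorElement_mem_of_lt (hP : IsPGroup p P) {M N : Subgroup P} [M.Normal]
    [N.Normal] (hMN : M < N) : ∃ g ∈ N, g ∉ M ∧ ∀ h, ⁅g, h⁆ ∈ M := by
  have : (N.map (QuotientGroup.mk' M)).Normal :=
    Subgroup.Normal.map inferInstance _ (QuotientGroup.mk'_surjective M)
  have hne : N.map (QuotientGroup.mk' M) ≠ ⊥ := by
    obtain ⟨g, hgN, hgM⟩ := SetLike.exists_of_lt hMN
    intro h
    have := h ▸ Subgroup.mem_map_of_mem (QuotientGroup.mk' M) hgN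
    exact hgM ((QuotientGroup.eq_one_iff g).1 this)
  obtain ⟨z, hzN, hz1, hzc⟩ := (hP.to_quotient M).exists_ne_one_mem_center_of_normal hne
  obtain ⟨g, hg, rfl⟩ := Subgroup.mem_map.1 hzN
  refine ⟨g, hg, fun hgM => hz1 ((QuotientGroup.eq_one_iff g).2 hgM), fun h => ?_⟩
  rw [← QuotientGroup.eq_one_iff, ← QuotientGroup.mk'_apply, map_commutatorElement,
    commutatorElement_eq_one_iff_mul_comm]
  exact Subgroup.mem_center_iff.1 hzc _ |>.symm

end IsPGroup

namespace AddSubgroup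

variable {A : Type*} [AddCommGroup A] (H : AddSubgroup A)

def PreservesCosets (g : Perm A) : Prop :=
  ∀ x y, x - y ∈ H → g x - g y ∈ H

def fixingCosets : Subgroup (Perm A) where
  carrier := {g | ∀ x, g x - x ∈ H}
  one_mem' x := by simp
  mul_mem' {g h} hg hh x := by
    simpa using H.add_mem (hg (h x)) (hh x)
  inv_mem' {g} hg x := by
    simpa using H.neg_mem (hg (g⁻¹ x))

theorem fixingCosets_subgroupOf_normal {G : Subgroup (Perm A)}
    (hG : ∀ g ∈ G, H.PreservesCosets g) : (H.fixingCosets.subgroupOf G).Normal where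
  conj_mem k hk g x := by
    simpa using hG g g.2 _ _ (hk ((g : Perm A)⁻¹ x))

def centralTranslations (G : Subgroup (Perm A)) : AddSubgroup A where
  carrier := {s | ∀ g ∈ G, ∀ x, g (s + x) - (s + g x) ∈ H}
  zero_mem' g _ x := by simp
  add_mem' {s t} hs ht g hg x := by
    convert H.add_mem (hs g hg (t + x)) (ht g hg x) using 1
    rw [add_assoc]; abel
  neg_mem' {s} hs g hg x := by
    convert H.neg_mem (hs g hg (-s + x)) using 1
    simp only [add_neg_cancel_left]; abel

variable {H}

theorem le_centralTranslations {G : Subgroup (Perm A)} (hG : ∀ g ∈ G, H.PreservesCosets g) :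
    H ≤ H.centralTranslations G := fun s hs g hg x => by
  convert H.sub_mem (hG g hg (s + x) x (by simpa using hs)) hs using 1
  abel

theorem centralTranslations_anti {G T : Subgroup (Perm A)} (hTG : T ≤ G) :
    H.centralTranslations G ≤ H.centralTranslations T :=
  fun _ hs g hg => hs g (hTG hg)

theorem forall_apply_sub_add_mem {T : Subgroup (Perm A)}
    (hcomm : ∀ μ ∈ T, ∀ ν ∈ T, μ * ν = ν * μ) (htrans : ∀ x y, ∃ μ ∈ T, μ x = y)
    (hpres : ∀ μ ∈ T, H.PreservesCosets μ) {r : A} (hr : r ∈ H.centralTranslations T)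
    {τ' : Perm A} (hτ' : τ' ∈ T) {x₀ : A} (h₀ : τ' x₀ - (r + x₀) ∈ H) (y : A) :
    τ' y - (r + y) ∈ H := by
  obtain ⟨μ, hμ, rfl⟩ := htrans x₀ y
  rw [← Perm.mul_apply, hcomm _ hτ' _ hμ, Perm.mul_apply]
  convert H.add_mem (hpres μ hμ _ _ h₀) (hr μ hμ x₀) using 1
  abel

theorem eq_of_lt_of_card_eq_prime_mul [Finite A] {p : ℕ} (hp : p.Prime) {K L : AddSubgroup A}
    (hHK : H < K) (hKL : K ≤ L) (hL : Nat.card L = p * Nat.card H) : K = L := by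
  obtain ⟨m, hm⟩ := card_dvd_of_le hHK.le
  obtain ⟨m', hm'⟩ := card_dvd_of_le hKL
  have hmm' : m * m' = p := by
    rw [hm, hL, mul_assoc, mul_comm p] at hm'
    exact (Nat.eq_of_mul_eq_mul_left Nat.card_pos hm').symm
  rcases hp.eq_one_or_self_of_dvd m ⟨m', hmm'.symm⟩ with rfl | rfl
  · exact absurd (eq_of_le_of_card_ge hHK.le (by rw [hm, mul_one])) hHK.ne
  · have : m' = 1 := by simpa [hp.ne_zero] using hmm'
    exact eq_of_le_of_card_ge hKL (by rw [hm', this, mul_one])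

variable {p : ℕ} [Fact p.Prime] [Finite A] {G : Subgroup (Perm A)} {H' : AddSubgroup A}

theorem exists_mem_centralTranslations_of_lt (hpG : IsPGroup p G)
    (htr : ∀ s, Equiv.addLeft s ∈ G) (hHH' : H < H') (hpres : ∀ g ∈ G, H.PreservesCosets g)
    (hpres' : ∀ g ∈ G, H'.PreservesCosets g) :
    ∃ a ∈ H', a ∉ H ∧ a ∈ H.centralTranslations G := by
  have := H.fixingCosets_subgroupOf_normal hpres
  have := H'.fixingCosets_subgroupOf_normal hpres'
  have hMN : H.fixingCosets.subgroupOf G < H'.fixingCosets.subgroupOf G := by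
    obtain ⟨s, hs', hs⟩ := SetLike.exists_of_lt hHH'
    refine SetLike.lt_iff_le_and_exists.2 ⟨fun g hg x => hHH'.le (hg x),
      ⟨Equiv.addLeft s, htr s⟩, fun x => by simpa using hs', fun h => hs (by simpa using h 0)⟩
  obtain ⟨⟨g, hgG⟩, hgN, hgM, hcomm⟩ := hpG.exists_commutatorElement_mem_of_lt hMN
  have hcomm' : ∀ h ∈ G, ∀ x, g (h (g⁻¹ (h⁻¹ x))) - x ∈ H := fun h hh => hcomm ⟨h, hh⟩
  -- `⁅g, (x + ·)⁆ ∈ M` evaluated at `x + g 0`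
  have hg : ∀ x, g x - (x + g 0) ∈ H := fun x => by
    simpa using hcomm' (Equiv.addLeft x) (htr x) (x + g 0)
  refine ⟨g 0, by simpa using hgN 0, fun ha => hgM fun x => by
    simpa [sub_add_eq_sub_sub] using H.add_mem (hg x) ha,
    fun h hh y => ?_⟩
  -- modulo `H`: `h (y + g 0) ≡ h (g y) ≡ g (h y) ≡ h y + g 0`
  have hhg := hpres h hh _ _ (hg y)
  have hgh : g (h y) - h (g y) ∈ H := by simpa using hcomm' h hh (h (g y))
  rw [add_comm (g 0) y]
  convert H.sub_mem (hg (h y)) (H.add_mem hgh hhg) using 1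
  abel

theorem le_centralTranslations_of_card_eq_prime_mul (hpG : IsPGroup p G)
    (htr : ∀ s, Equiv.addLeft s ∈ G) (hHH' : H < H') (hcard : Nat.card H' = p * Nat.card H)
    (hpres : ∀ g ∈ G, H.PreservesCosets g) (hpres' : ∀ g ∈ G, H'.PreservesCosets g) :
    H' ≤ H.centralTranslations G := by
  obtain ⟨a, haH', haH, ha⟩ := exists_mem_centralTranslations_of_lt hpG htr hHH' hpres hpres'
  have hlt : H < H.centralTranslations G ⊓ H' := SetLike.lt_iff_le_and_exists.2
    ⟨le_inf (le_centralTranslations hpres) hHH'.le, a, mem_inf.2 ⟨ha, haH'⟩, haH⟩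
  rw [← eq_of_lt_of_card_eq_prime_mul Fact.out hlt inf_le_right hcard]
  exact inf_le_left

end AddSubgroup

section InvariantPartition

variable {A : Type*} [AddCommGroup A] {P : Set (Set A)}

theorem mem_iff_exists_block_sub_mem (hP : Setoid.IsPartition P)
    (hinv : ∀ s : A, ∀ b ∈ P, (s + ·) '' b ∈ P) {b : Set A} (hb : b ∈ P) {x y : A}
    (hx : x ∈ b) : y ∈ b ↔ ∃ c ∈ P, 0 ∈ c ∧ y - x ∈ c := by
  constructor
  · intro hy
    exact ⟨_, hinv (-x) b hb, ⟨x, hx, neg_add_cancel x⟩, ⟨y, hy, neg_add_eq_sub x y⟩⟩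
  · rintro ⟨c, hc, h0, hyx⟩
    have hxc : x ∈ (x + ·) '' c := ⟨0, h0, add_zero x⟩
    rw [Setoid.eq_of_mem_eqv_class hP.2 hb hx (hinv x c hc) hxc]
    exact ⟨y - x, hyx, add_sub_cancel x y⟩

def blockSubgroup (hP : Setoid.IsPartition P) (hinv : ∀ s : A, ∀ b ∈ P, (s + ·) '' b ∈ P) :
    AddSubgroup A where
  carrier := {x | ∃ b ∈ P, 0 ∈ b ∧ x ∈ b}
  zero_mem' := by
    obtain ⟨b, ⟨hb, h0⟩, -⟩ := hP.2 0
    exact ⟨b, hb, h0, h0⟩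
  add_mem' := by
    rintro x y ⟨b, hb, h0, hx⟩ hy
    exact ⟨b, hb, h0, (mem_iff_exists_block_sub_mem hP hinv hb hx).2 (by simpa using hy)⟩
  neg_mem' := by
    rintro x ⟨b, hb, h0, hx⟩
    simpa using (mem_iff_exists_block_sub_mem hP hinv hb hx).1 h0

variable (hP : Setoid.IsPartition P) (hinv : ∀ s : A, ∀ b ∈ P, (s + ·) '' b ∈ P)

theorem mem_iff_sub_mem_blockSubgroup {b : Set A} (hb : b ∈ P) {x y : A} (hx : x ∈ b) :
    y ∈ b ↔ y - x ∈ blockSubgroup hP hinv :=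
  mem_iff_exists_block_sub_mem hP hinv hb hx

theorem card_blockSubgroup {m : ℕ} (hcard : ∀ b ∈ P, Nat.card b = m) :
    Nat.card (blockSubgroup hP hinv) = m := by
  obtain ⟨b, ⟨hb, h0⟩, -⟩ := hP.2 0
  have : (blockSubgroup hP hinv : Set A) = b :=
    Set.ext fun y => by simpa using (mem_iff_sub_mem_blockSubgroup hP hinv hb h0).symm
  rw [← hcard b hb, ← this]
  rfl

theorem blockSubgroup_mono {Q : Set (Set A)} (hQ : Setoid.IsPartition Q)
    (hinvQ : ∀ s : A, ∀ b ∈ Q, (s + ·) '' b ∈ Q) (hPQ : ∀ b ∈ P, ∃ c ∈ Q, b ⊆ c) :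
    blockSubgroup hP hinv ≤ blockSubgroup hQ hinvQ := by
  rintro x ⟨b, hb, h0, hx⟩
  obtain ⟨c, hc, hbc⟩ := hPQ b hb
  exact ⟨c, hc, hbc h0, hbc hx⟩

theorem mem_blockSubgroup_of_forall_image_eq {r : A} (hr : ∀ b ∈ P, (r + ·) '' b = b) :
    r ∈ blockSubgroup hP hinv := by
  obtain ⟨b, ⟨hb, h0⟩, -⟩ := hP.2 0
  exact ⟨b, hb, h0, hr b hb ▸ ⟨0, h0, add_zero r⟩⟩

theorem blockSubgroup_lt [Finite A] {Q : Set (Set A)} (hQ : Setoid.IsPartition Q)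
    (hinvQ : ∀ s : A, ∀ b ∈ Q, (s + ·) '' b ∈ Q) (hPQ : ∀ b ∈ P, ∃ c ∈ Q, b ⊆ c) {p m : ℕ}
    (hp : 1 < p) (hcardP : ∀ b ∈ P, Nat.card b = m) (hcardQ : ∀ c ∈ Q, Nat.card c = p * m) :
    blockSubgroup hP hinv < blockSubgroup hQ hinvQ := by
  refine lt_of_le_of_ne (blockSubgroup_mono hP hinv hQ hinvQ hPQ) fun h => ?_
  have hcard := card_blockSubgroup hP hinv hcardP
  have hm : 0 < m := hcard ▸ Nat.card_pos
  have := (h ▸ hcard).symm.trans (card_blockSubgroup hQ hinvQ hcardQ)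
  nlinarith

theorem preservesCosets_blockSubgroup {g : Perm A} (hg : ∀ b ∈ P, g '' b ∈ P) :
    (blockSubgroup hP hinv).PreservesCosets g := by
  intro x y hxy
  obtain ⟨b, ⟨hb, hy⟩, -⟩ := hP.2 y
  have hx : x ∈ b := (mem_iff_sub_mem_blockSubgroup hP hinv hb hy).2 hxy
  exact (mem_iff_sub_mem_blockSubgroup hP hinv (hg b hb) ⟨y, hy, rfl⟩).1 ⟨x, hx, rfl⟩

theorem image_eq_image_iff_sub_mem_blockSubgroup {f g : Perm A} (hf : ∀ b ∈ P, f '' b ∈ P)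
    (hg : ∀ b ∈ P, g '' b ∈ P) {b : Set A} (hb : b ∈ P) {x : A} (hx : x ∈ b) :
    f '' b = g '' b ↔ f x - g x ∈ blockSubgroup hP hinv := by
  have hgx : g x ∈ g '' b := ⟨x, hx, rfl⟩
  rw [← mem_iff_sub_mem_blockSubgroup hP hinv (hg b hb) hgx]
  refine ⟨fun h => h ▸ ⟨x, hx, rfl⟩, fun h => ?_⟩
  exact Setoid.eq_of_mem_eqv_class hP.2 (hf b hb) ⟨x, hx, rfl⟩ (hg b hb) h

end InvariantPartition

theorem forall_image_eq_addLeft_image {A : Type*} [AddCommGroup A] [Finite A] {p : ℕ}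
    [Fact p.Prime] {G T : Subgroup (Perm A)} (hpG : IsPGroup p G)
    (htr : ∀ s, Equiv.addLeft s ∈ G) (hTG : T ≤ G) (hcomm : ∀ μ ∈ T, ∀ ν ∈ T, μ * ν = ν * μ)
    (htrans : ∀ x y, ∃ μ ∈ T, μ x = y) {P Q : Set (Set A)} (hP : Setoid.IsPartition P)
    (hQ : Setoid.IsPartition Q) (hPG : ∀ g ∈ G, ∀ b ∈ P, ⇑g '' b ∈ P)
    (hQG : ∀ g ∈ G, ∀ c ∈ Q, ⇑g '' c ∈ Q) (hPQ : ∀ b ∈ P, ∃ c ∈ Q, b ⊆ c) {m : ℕ}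
    (hcardP : ∀ b ∈ P, Nat.card b = m) (hcardQ : ∀ c ∈ Q, Nat.card c = p * m) {r : A}
    (hr : ∀ c ∈ Q, ⇑(Equiv.addLeft r) '' c = c) {τ' : Perm A} (hτ' : τ' ∈ T) {b₀ : Set A}
    (hb₀ : b₀ ∈ P) (hagree : ⇑τ' '' b₀ = ⇑(Equiv.addLeft r) '' b₀) :
    ∀ b ∈ P, ⇑τ' '' b = ⇑(Equiv.addLeft r) '' b := by
  have hinvP : ∀ s : A, ∀ b ∈ P, (s + ·) '' b ∈ P := fun s => hPG _ (htr s)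
  have hinvQ : ∀ s : A, ∀ c ∈ Q, (s + ·) '' c ∈ Q := fun s => hQG _ (htr s)
  set H := blockSubgroup hP hinvP
  have hrT : r ∈ H.centralTranslations T := AddSubgroup.centralTranslations_anti hTG <|
    AddSubgroup.le_centralTranslations_of_card_eq_prime_mul hpG htr
      (blockSubgroup_lt hP hinvP hQ hinvQ hPQ (Fact.out : p.Prime).one_lt hcardP hcardQ)
      (by rw [card_blockSubgroup hP hinvP hcardP, card_blockSubgroup hQ hinvQ hcardQ])
      (fun g hg => preservesCosets_blockSubgroup hP hinvP (hPG g hg))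
      (fun g hg => preservesCosets_blockSubgroup hQ hinvQ (hQG g hg))
      (mem_blockSubgroup_of_forall_image_eq hQ hinvQ hr)
  have himage : ∀ b ∈ P, ∀ x ∈ b, ⇑τ' '' b = ⇑(Equiv.addLeft r) '' b ↔ τ' x - (r + x) ∈ H :=
    fun b hb x hx => image_eq_image_iff_sub_mem_blockSubgroup hP hinvP
      (hPG τ' (hTG hτ')) (hinvP r) hb hx
  obtain ⟨x₀, hx₀⟩ := Setoid.nonempty_of_mem_partition hP hb₀
  intro b hb
  obtain ⟨x, hx⟩ := Setoid.nonempty_of_mem_partition hP hb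
  exact (himage b hb x hx).2 <| AddSubgroup.forall_apply_sub_add_mem hcomm htrans
    (fun μ hμ => preservesCosets_blockSubgroup hP hinvP (hPG μ (hTG hμ))) hrT hτ'
    ((himage b₀ hb₀ x₀ hx₀).1 hagree) x

section RegularRepresentation

variable {p n : ℕ}

theorem addLeft_mem_RL (s : Pt p n) : Equiv.addLeft s ∈ RL p n := ⟨s, fun _ => rfl⟩

theorem RLpi_mul_comm {π μ ν : Perm (Pt p n)} (hμ : μ ∈ RLpi p n π) (hν : ν ∈ RLpi p n π) :
    μ * ν = ν * μ := by
  obtain ⟨ρ, ⟨u, hu⟩, rfl⟩ := hμ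
  obtain ⟨ρ', ⟨v, hv⟩, rfl⟩ := hν
  have h : ρ * ρ' = ρ' * ρ := Equiv.ext fun x => by
    simp only [Perm.mul_apply, hu, hv, add_left_comm]
  calc π⁻¹ * ρ * π * (π⁻¹ * ρ' * π) = π⁻¹ * (ρ * ρ') * π := by group
    _ = π⁻¹ * (ρ' * ρ) * π := by rw [h]
    _ = π⁻¹ * ρ' * π * (π⁻¹ * ρ * π) := by group

theorem exists_mem_RLpi_apply_eq (π : Perm (Pt p n)) (x y : Pt p n) :
    ∃ μ ∈ RLpi p n π, μ x = y :=
  ⟨π⁻¹ * Equiv.addLeft (π y - π x) * π, ⟨_, addLeft_mem_RL _, rfl⟩, by simp⟩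

end RegularRepresentation

theorem stmt_3_general (p n : ℕ) (hp : p.Prime)
    (π : Equiv.Perm (Pt p n))
    (G : Subgroup (Equiv.Perm (Pt p n))) (hG : G = RL p n ⊔ RLpi p n π)
    (hpG : IsPGroup p ↑G)
    (B : ℕ → Set (Set (Pt p n)))
    (hBpart : ∀ i ≤ n, Setoid.IsPartition (B i))
    (hBsize : ∀ i ≤ n, ∀ b ∈ B i, Nat.card b = p ^ i)
    (hBinv : ∀ i ≤ n, ∀ g ∈ G, ∀ b ∈ B i, ⇑g '' b ∈ B i)
    (hBref : ∀ i < n, ∀ b ∈ B i, ∃ c ∈ B (i + 1), b ⊆ c)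
    (i : ℕ) (hi1 : 1 ≤ i) (hin : i ≤ n)
    (τ : Equiv.Perm (Pt p n)) (hτR : τ ∈ RL p n)
    (hfix : ∀ b ∈ B i, ⇑τ '' b = b)
    (τ' : Equiv.Perm (Pt p n)) (hτ'mem : τ' ∈ RLpi p n π)
    (b₀ : Set (Pt p n)) (hb₀ : b₀ ∈ B (i - 1)) (hagree : ⇑τ' '' b₀ = ⇑τ '' b₀) :
    ∀ b ∈ B (i - 1), ⇑τ' '' b = ⇑τ '' b := by
  have := Fact.mk hp
  obtain ⟨j, rfl⟩ : ∃ j, i = j + 1 := ⟨i - 1, by omega⟩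
  rw [Nat.add_sub_cancel] at hb₀ ⊢
  obtain ⟨r, hr⟩ := hτR
  obtain rfl : τ = Equiv.addLeft r := Equiv.ext hr
  have hRL : RL p n ≤ G := hG ▸ le_sup_left
  have hj : j ≤ n := by omega
  exact forall_image_eq_addLeft_image hpG (fun s => hRL (addLeft_mem_RL s)) (hG ▸ le_sup_right)
    (fun _ hμ _ hν => RLpi_mul_comm hμ hν) (exists_mem_RLpi_apply_eq π) (hBpart j hj)
    (hBpart (j + 1) hin) (hBinv j hj) (hBinv (j + 1) hin) (hBref j (by omega)) (hBsize j hj)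
    (fun c hc => (hBsize (j + 1) hin c hc).trans (pow_succ' p j)) hfix hτ'mem hb₀ hagree

/-- **Lemma 2.3.** If `τ ∈ R_L` fixes every block of `ℬ_i` setwise but not every block
of `ℬ_{i-1}`, and `τ' ∈ π⁻¹R_Lπ` satisfies `τ'(B) = τ(B)` for some block `B ∈ ℬ_{i-1}`,
then `τ'(B') = τ(B')` for every block `B' ∈ ℬ_{i-1}`. -/
theorem stmt_3 (p n : ℕ) (hp : p.Prime) (hn : 1 ≤ n)
    (π : Equiv.Perm (Pt p n))
    (G : Subgroup (Equiv.Perm (Pt p n))) (hG : G = RL p n ⊔ RLpi p n π)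
    (hpG : IsPGroup p ↑G)
    (B : ℕ → Set (Set (Pt p n)))
    (hBpart : ∀ i ≤ n, Setoid.IsPartition (B i))
    (hBsize : ∀ i ≤ n, ∀ b ∈ B i, Nat.card b = p ^ i)
    (hBinv : ∀ i ≤ n, ∀ g ∈ G, ∀ b ∈ B i, ⇑g '' b ∈ B i)
    (hBref : ∀ i < n, ∀ b ∈ B i, ∃ c ∈ B (i + 1), b ⊆ c)
    (i : ℕ) (hi1 : 1 ≤ i) (hin : i ≤ n)
    (τ : Equiv.Perm (Pt p n)) (hτR : τ ∈ RL p n)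
    (hfix : ∀ b ∈ B i, ⇑τ '' b = b)
    (hnotfix : ¬ ∀ b ∈ B (i - 1), ⇑τ '' b = b)
    (τ' : Equiv.Perm (Pt p n)) (hτ'mem : τ' ∈ RLpi p n π)
    (b₀ : Set (Pt p n)) (hb₀ : b₀ ∈ B (i - 1)) (hagree : ⇑τ' '' b₀ = ⇑τ '' b₀) :
    ∀ b ∈ B (i - 1), ⇑τ' '' b = ⇑τ '' b :=
  stmt_3_general p n hp π G hG hpG B hBpart hBsize hBinv hBref i hi1 hin τ hτR hfix τ' hτ'mem b₀ hb₀
    hagree
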